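/- Let G be a subgroup of (Z/nZ)^×, acting on Z/nZ by multiplication. Then each orbit of this action is contained in a single set {a : gcd(a,n) = d} for some divisor d of n, and within {a : gcd(a,n) = d}, the orbits are exactly the sets d·C where C ranges over the cosets of the image of G in (Z/(n/d)Z)^×. -/

import Mathlib

/-!
Multiplication by a unit `u` preserves `gcd(a, n)`, since `u.val` is coprime to `n` and
`gcd(a, n)` only depends on `a mod n`. If `d ∣ n`, the map `u ↦ d * u.val` from `ZMod (n / d)`
to `ZMod n` intertwines multiplication by the reduction of `g` with multiplication by `g`, so
the orbit of `s = d * (s.val / d)` is `d` times the coset of `s.val / d`; every unit `t` of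
`ZMod (n / d)` arises this way from `s = d * t.val`, which has `gcd(s, n) = d`.
-/

namespace ZMod

theorem gcd_val_unit_mul {n : ℕ} (u : (ZMod n)ˣ) (a : ZMod n) :
    Nat.gcd ((u : ZMod n) * a).val n = Nat.gcd a.val n := by
  rw [val_mul, ← Nat.gcd_rec, Nat.gcd_comm n]
  exact Nat.Coprime.gcd_mul_left_cancel _ (val_coe_unit_coprime u)

theorem natCast_mul_val_castHom_mul {n m d : ℕ} [NeZero n] (hdm : d * m = n) (a : ZMod n)
    (k : ℕ) :
    ((d * (castHom (Dvd.intro_left d hdm) (ZMod m) a * k).val : ℕ) : ZMod n) =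
      a * ((d * k : ℕ) : ZMod n) := by
  have hreduce : castHom (Dvd.intro_left d hdm) (ZMod m) a * k = ((a.val * k : ℕ) : ZMod m) := by
    rw [castHom_apply, ← natCast_val, Nat.cast_mul]
  rw [hreduce, val_natCast]
  conv_rhs => rw [← natCast_zmod_val a, ← Nat.cast_mul]
  rw [natCast_eq_natCast_iff]
  have hmod := (Nat.mod_modEq (a.val * k) m).mul_left' d
  rw [hdm] at hmod
  calc d * (a.val * k % m) ≡ d * (a.val * k) [MOD n] := hmod
    _ = a.val * (d * k) := by ring

theorem val_natCast_mul_val {n m d : ℕ} [NeZero n] (hdm : d * m = n) (u : ZMod m) :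
    ((d * u.val : ℕ) : ZMod n).val = d * u.val := by
  obtain ⟨hd0, hm0⟩ := mul_ne_zero_iff.mp (hdm ▸ NeZero.ne n : d * m ≠ 0)
  have : NeZero m := ⟨hm0⟩
  exact val_natCast_of_lt (hdm ▸ Nat.mul_lt_mul_of_pos_left u.val_lt (Nat.pos_of_ne_zero hd0))

theorem gcd_val_natCast_mul_val_unit {n m d : ℕ} [NeZero n] (hdm : d * m = n) (t : (ZMod m)ˣ) :
    Nat.gcd ((d * (t : ZMod m).val : ℕ) : ZMod n).val n = d := by
  rw [val_natCast_mul_val hdm, ← hdm, Nat.gcd_mul_left, (val_coe_unit_coprime t).gcd_eq_one,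
    mul_one]

theorem orbit_eq_image_mul_coset {n d : ℕ} [NeZero n] (hd : d ∣ n) (G : Subgroup (ZMod n)ˣ)
    {s : ZMod n} (hs : d ∣ s.val) :
    {x : ZMod n | ∃ g : (ZMod n)ˣ, g ∈ G ∧ x = (g : ZMod n) * s} =
      (fun u : ZMod (n / d) => ((d * u.val : ℕ) : ZMod n)) ''
        {u : ZMod (n / d) | ∃ g' : (ZMod (n / d))ˣ,
          g' ∈ Subgroup.map
            (Units.map (castHom (Nat.div_dvd_of_dvd hd) (ZMod (n / d))).toMonoidHom) G ∧
          u = (g' : ZMod (n / d)) * ((s.val / d : ℕ) : ZMod (n / d))} := by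
  have hlift (g : (ZMod n)ˣ) :
      ((d * (castHom (Nat.div_dvd_of_dvd hd) (ZMod (n / d)) g *
        ((s.val / d : ℕ) : ZMod (n / d))).val : ℕ) : ZMod n) = g * s := by
    rw [natCast_mul_val_castHom_mul (Nat.mul_div_cancel' hd), Nat.mul_div_cancel' hs,
      natCast_zmod_val]
  ext x
  constructor
  · rintro ⟨g, hg, rfl⟩
    exact ⟨_, ⟨Units.map _ g, ⟨g, hg, rfl⟩, rfl⟩, hlift g⟩
  · rintro ⟨u, ⟨g', ⟨g, hg, rfl⟩, rfl⟩, rfl⟩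
    exact ⟨g, hg, hlift g⟩

end ZMod

theorem stmt_6_general (n : ℕ) (G : Subgroup (ZMod n)ˣ) :
    let orbit : ZMod n → Set (ZMod n) :=
      fun s => {x : ZMod n | ∃ g : (ZMod n)ˣ, g ∈ G ∧ x = (g : ZMod n) * s}
    (∀ s : ZMod n, ∀ x ∈ orbit s, Nat.gcd x.val n = Nat.gcd s.val n) ∧
    (∀ d : ℕ, ∀ hd : d ∣ n, d < n →
      ((∀ s : ZMod n, Nat.gcd s.val n = d →
        orbit s = (fun u : ZMod (n / d) => ((d * u.val : ℕ) : ZMod n)) ''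
          {u : ZMod (n / d) | ∃ g' : (ZMod (n / d))ˣ,
            g' ∈ Subgroup.map
              (Units.map (ZMod.castHom (Nat.div_dvd_of_dvd hd) (ZMod (n / d))).toMonoidHom) G ∧
            u = (g' : ZMod (n / d)) * ((s.val / d : ℕ) : ZMod (n / d))}) ∧
      (∀ t : (ZMod (n / d))ˣ, ∃ s : ZMod n, Nat.gcd s.val n = d ∧
        orbit s = (fun u : ZMod (n / d) => ((d * u.val : ℕ) : ZMod n)) ''
          {u : ZMod (n / d) | ∃ g' : (ZMod (n / d))ˣ,
            g' ∈ Subgroup.map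
              (Units.map (ZMod.castHom (Nat.div_dvd_of_dvd hd) (ZMod (n / d))).toMonoidHom) G ∧
            u = (g' : ZMod (n / d)) * (t : ZMod (n / d))}))) := by
  intro orbit
  refine ⟨fun s x ⟨g, _, hx⟩ => hx ▸ ZMod.gcd_val_unit_mul g s, fun d hd hdn => ?_⟩
  have : NeZero n := ⟨by omega⟩
  have hd0 : 0 < d := Nat.pos_of_dvd_of_pos hd (by omega)
  have : NeZero (n / d) := ⟨(Nat.div_pos hdn.le hd0).ne'⟩
  have hdm : d * (n / d) = n := Nat.mul_div_cancel' hd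
  have horbit (s : ZMod n) (hs : Nat.gcd s.val n = d) := ZMod.orbit_eq_image_mul_coset hd G
    (hs ▸ Nat.gcd_dvd_left s.val n)
  have hgcd := ZMod.gcd_val_natCast_mul_val_unit hdm
  refine ⟨horbit, fun t => ⟨_, hgcd t, (horbit _ (hgcd t)).trans ?_⟩⟩
  rw [ZMod.val_natCast_mul_val hdm, Nat.mul_div_cancel_left _ hd0, ZMod.natCast_zmod_val]

/-- The orbits of Z/nZ under multiplication by a subgroup G of
(Z/nZ)ˣ preserve gcd with n, and within each gcd-level set {a : gcd(a,n) = d}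
the orbits are exactly the sets d·C, C a coset of the image of G in (Z/(n/d)Z)ˣ. -/
theorem stmt_6 (n : ℕ) (hn : 2 ≤ n) (G : Subgroup (ZMod n)ˣ) :
    let orbit : ZMod n → Set (ZMod n) :=
      fun s => {x : ZMod n | ∃ g : (ZMod n)ˣ, g ∈ G ∧ x = (g : ZMod n) * s}
    (∀ s : ZMod n, ∀ x ∈ orbit s, Nat.gcd x.val n = Nat.gcd s.val n) ∧
    (∀ d : ℕ, ∀ hd : d ∣ n, d < n →
      ((∀ s : ZMod n, Nat.gcd s.val n = d →
        orbit s = (fun u : ZMod (n / d) => ((d * u.val : ℕ) : ZMod n)) ''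
          {u : ZMod (n / d) | ∃ g' : (ZMod (n / d))ˣ,
            g' ∈ Subgroup.map
              (Units.map (ZMod.castHom (Nat.div_dvd_of_dvd hd) (ZMod (n / d))).toMonoidHom) G ∧
            u = (g' : ZMod (n / d)) * ((s.val / d : ℕ) : ZMod (n / d))}) ∧
      (∀ t : (ZMod (n / d))ˣ, ∃ s : ZMod n, Nat.gcd s.val n = d ∧
        orbit s = (fun u : ZMod (n / d) => ((d * u.val : ℕ) : ZMod n)) ''
          {u : ZMod (n / d) | ∃ g' : (ZMod (n / d))ˣ,
            g' ∈ Subgroup.map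
              (Units.map (ZMod.castHom (Nat.div_dvd_of_dvd hd) (ZMod (n / d))).toMonoidHom) G ∧
            u = (g' : ZMod (n / d)) * (t : ZMod (n / d))}))) :=
  stmt_6_general n G
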